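/- Let $k$ be a field. For any nonzero ideal $I$ of $k[x^{\pm}][[t]]$, the intersection $I \cap k[x][[t]]$ is nonzero. -/

import Mathlib

/-!
Write a nonzero `f ∈ k[x^±][[t]]` as `t^d f'` with `a := f'(0) ≠ 0`. Since `a = x^{-m} x^s q`
with `q(0) ≠ 0`, the polynomial `q` is coprime to every power of `x`, and hence every Laurent
polynomial is a polynomial modulo `a k[x^±]`. This lets us choose the coefficients of a series `h`
one at a time, starting from `h(0) = x^m`, so that every coefficient of `h f'` is a polynomial.
Then `f h ∈ I` is a nonzero element of `k[x][[t]]`.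
-/

open LaurentPolynomial Polynomial

theorem LaurentPolynomial.exists_mul_add_mem_range_toLaurent {k : Type*} [Field k]
    {a : k[T;T⁻¹]} (ha : a ≠ 0) (c : k[T;T⁻¹]) :
    ∃ h, a * h + c ∈ Set.range (toLaurent : k[X] → k[T;T⁻¹]) := by
  induction a using induction_on_mul_T with | mul_T p m =>
  induction c using induction_on_mul_T with | mul_T d r =>
  have hp : p ≠ 0 := by rintro rfl; simp at ha
  obtain ⟨q, hpq, hXq⟩ := p.exists_eq_pow_rootMultiplicity_mul_and_not_dvd hp 0
  generalize p.rootMultiplicity 0 = s at hpq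
  rw [C_0, sub_zero] at hpq hXq
  subst hpq
  obtain ⟨u, v, huv⟩ := (irreducible_X.coprime_iff_not_dvd.2 hXq).pow_left (m := r)
  -- multiply `u x^r + v q = 1` by `d x^{-r}`, and note `q x^{-r} = a x^{m-s-r}`
  refine ⟨-(T (m - s - r) * toLaurent (v * d)), u * d, ?_⟩
  have hT : T s * T (-m) * T (m - s - r) = (T (-r) : k[T;T⁻¹]) := by
    rw [← T_add, ← T_add]; ring_nf
  have hT' : T (-r) * T r = (1 : k[T;T⁻¹]) := by rw [← T_add]; simp
  have huv' := congrArg toLaurent huv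
  simp only [map_add, map_mul, map_one, toLaurent_X_pow] at huv' ⊢
  linear_combination toLaurent d * T (-r) * huv' + toLaurent v * toLaurent q * toLaurent d * hT
    - toLaurent u * toLaurent d * hT'

namespace PowerSeries

variable {S : Type*} [CommRing S] {P : S → Prop} {f : S⟦X⟧}

noncomputable def correctingCoeff (hP : ∀ c, ∃ x, P (constantCoeff f * x + c)) (x₀ : S) :
    ℕ → S
  | 0 => x₀
  | n + 1 => (hP (∑ i : Fin (n + 1), correctingCoeff hP x₀ i * coeff (n + 1 - i) f)).choose

theorem coeff_mk_mul (c : ℕ → S) (n : ℕ) :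
    coeff n (mk c * f) =
      constantCoeff f * c n + ∑ i ∈ Finset.range n, c i * coeff (n - i) f := by
  rw [coeff_mul,
    Finset.Nat.sum_antidiagonal_eq_sum_range_succ (fun i j => coeff i (mk c) * coeff j f),
    Finset.sum_range_succ]
  simp [add_comm, mul_comm]

theorem exists_constantCoeff_eq_and_forall_coeff_mul
    (hP : ∀ c, ∃ x, P (constantCoeff f * x + c)) {x₀ : S}
    (hx₀ : P (constantCoeff f * x₀)) :
    ∃ h : S⟦X⟧, constantCoeff h = x₀ ∧ ∀ n, P (coeff n (h * f)) := by
  refine ⟨mk (correctingCoeff hP x₀), by simp [correctingCoeff], fun n => ?_⟩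
  rw [coeff_mk_mul]
  cases n with
  | zero => simpa [correctingCoeff] using hx₀
  | succ n =>
    rw [correctingCoeff,
      ← Fin.sum_univ_eq_sum_range (fun i => correctingCoeff hP x₀ i * coeff (n + 1 - i) f)]
    exact (hP _).choose_spec

theorem exists_map_eq_of_forall_coeff_mem_range {R : Type*} [CommRing R] (φ : R →+* S)
    {F : S⟦X⟧} (hF : ∀ n, coeff n F ∈ Set.range φ) : ∃ g : R⟦X⟧, map φ g = F := by
  choose g hg using hF
  exact ⟨mk g, ext fun n => by simp [hg]⟩

end PowerSeries

theorem stmt_9 (k : Type*) [Field k]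
    (I : Ideal (PowerSeries (LaurentPolynomial k))) (hI : I ≠ ⊥) :
    ∃ g : PowerSeries (Polynomial k),
      g ≠ 0 ∧ PowerSeries.map (Polynomial.toLaurent) g ∈ I := by
  obtain ⟨f, hfI, hf0⟩ := Submodule.exists_mem_ne_zero_of_ne_bot hI
  set f' := f.divXPowOrder
  have ha : PowerSeries.constantCoeff f' ≠ 0 :=
    PowerSeries.constantCoeff_divXPowOrder_eq_zero_iff.not.2 hf0
  obtain ⟨m, p, hp⟩ := (PowerSeries.constantCoeff f').exists_T_pow
  obtain ⟨h, hh0, hcoeff⟩ := PowerSeries.exists_constantCoeff_eq_and_forall_coeff_mul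
    (exists_mul_add_mem_range_toLaurent ha) ⟨p, hp⟩
  obtain ⟨g, hg⟩ := PowerSeries.exists_map_eq_of_forall_coeff_mem_range _ hcoeff
  have hfh : PowerSeries.map toLaurent (PowerSeries.X ^ f.order.toNat * g) = f * h := by
    rw [map_mul, map_pow, PowerSeries.map_X, hg]
    conv_rhs => rw [← PowerSeries.X_pow_order_mul_divXPowOrder (f := f)]
    ring
  have hh : h ≠ 0 := fun h0 => (isUnit_T (m : ℤ)).ne_zero (by rw [← hh0, h0, map_zero])
  refine ⟨_, fun h0 => mul_ne_zero hf0 hh ?_, hfh ▸ I.mul_mem_right h hfI⟩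
  rw [← hfh, h0, map_zero]
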